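/- Uniform ADN theorem: Let δ be a partial computable fixed point free function. Then there exists a total computable function f such that for every e and n: if φ_e(n)↓ then W_{f(⟨e,n⟩)} = W_{φ_e(n)}, and if φ_e(n)↑ then δ(f(⟨e,n⟩))↑. -/

import Mathlib

open Part

/-- The `n`-th partial computable function in a standard numbering. -/
def phi (n : ℕ) : ℕ →. ℕ := (Denumerable.ofNat Nat.Partrec.Code n).eval

/-- `W n` is the domain of the `n`-th partial computable function. -/
def Wdom (n : ℕ) : Set ℕ := {x | (phi n x).Dom}

/-- Partial functions computable relative to a partial oracle `O`. -/
inductive RecursiveIn' (O : ℕ →. ℕ) : (ℕ →. ℕ) → Prop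
  | oracle : RecursiveIn' O O
  | zero : RecursiveIn' O (pure 0)
  | succ : RecursiveIn' O Nat.succ
  | left : RecursiveIn' O ↑fun n : ℕ => n.unpair.1
  | right : RecursiveIn' O ↑fun n : ℕ => n.unpair.2
  | pair {f g} : RecursiveIn' O f → RecursiveIn' O g →
      RecursiveIn' O fun n => Nat.pair <$> f n <*> g n
  | comp {f g} : RecursiveIn' O f → RecursiveIn' O g →
      RecursiveIn' O fun n => g n >>= f
  | prec {f g} : RecursiveIn' O f → RecursiveIn' O g →
      RecursiveIn' O (Nat.unpaired fun a n =>
        n.rec (f a) fun y IH => do let i ← IH; g (Nat.pair a (Nat.pair y i)))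
  | rfind {f} : RecursiveIn' O f →
      RecursiveIn' O fun a => Nat.rfind fun n => (fun m => m = 0) <$> f (Nat.pair a n)

open Classical in
/-- The characteristic function of a set `A` as a partial oracle. -/
noncomputable def chi (A : Set ℕ) : ℕ →. ℕ := fun n => Part.some (if n ∈ A then 1 else 0)

/-- A total function is computable relative to the set `A`. -/
def ComputableInSet (A : Set ℕ) (f : ℕ → ℕ) : Prop := RecursiveIn' (chi A) ↑f

/-- A partial function is computable relative to the set `A`. -/
def PartComputableInSet (A : Set ℕ) (f : ℕ →. ℕ) : Prop := RecursiveIn' (chi A) f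

/-- Turing reducibility between sets of naturals. -/
def TuringLe (A B : Set ℕ) : Prop := RecursiveIn' (chi B) (chi A)

/-- The halting set ∅′. -/
def K0 : Set ℕ := {n | (phi n n).Dom}

/-- `A` is computably enumerable. -/
def CE (A : Set ℕ) : Prop := REPred (· ∈ A)

/-!
Race `φ_e(n)` against `δ` applied to the index being built: by the recursion theorem with
parameters there is a uniformly computable index `f ⟨e, n⟩` that waits for the first of the two
computations to converge, with output `v`, and then behaves like `φ_v`. So `W_{f ⟨e, n⟩} = W_v`,
and `v` cannot come from `δ`, since `δ` is fixed point free. Hence only `φ_e(n)` can win: if it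
converges, `v = φ_e(n)`; if it diverges, nobody wins, so `δ (f ⟨e, n⟩)` diverges.
-/

open Encodable Nat.Partrec Nat.Partrec.Code

theorem Nat.Partrec.Code.exists_computable_fixed_point_param {α : Type*} [Primcodable α]
    {F : α → Code → ℕ →. ℕ} (hF : Partrec₂ fun (p : α × Code) (y : ℕ) => F p.1 p.2 y) :
    ∃ g : α → Code, Computable g ∧ ∀ a, eval (g a) = F a (g a) := by
  have hparam : Computable fun p : Code × ℕ => p.2.unpair.1 :=
    Computable.fst.comp (Computable.unpair.comp Computable.snd)
  have harg : Computable fun p : Code × ℕ => p.2.unpair.2 :=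
    Computable.snd.comp (Computable.unpair.comp Computable.snd)
  have hcurry : Computable fun p : Code × ℕ => curry p.1 p.2.unpair.1 :=
    primrec₂_curry.to_comp.comp Computable.fst hparam
  -- `c` reads the parameter `a` off its input `⟨encode a, y⟩`, so `curry c (encode a)` knows `a`.
  have hG : Partrec₂ fun (c : Code) (z : ℕ) =>
      (decode (α := α) z.unpair.1 : Part α).bind fun a => F a (curry c z.unpair.1) z.unpair.2 :=
    (Computable.decode.comp hparam).ofOption.bind
      (hF.comp (Computable.snd.pair (hcurry.comp Computable.fst)) (harg.comp Computable.fst)).to₂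
  obtain ⟨c, hc⟩ := fixed_point₂ hG
  refine ⟨fun a => curry c (encode a),
    (primrec₂_curry.comp (_root_.Primrec.const c) _root_.Primrec.encode).to_comp, fun a => ?_⟩
  funext y
  simp [eval_curry, hc]

theorem partrec₂_phi : Partrec₂ phi :=
  (eval_part.comp ((Computable.ofNat Code).comp Computable.fst) Computable.snd).to₂

theorem Wdom_encode_of_eval_eq_bind {c : Code} {r : Part ℕ} {v : ℕ}
    (hc : eval c = fun y => r >>= fun u => phi u y) (hv : v ∈ r) :
    Wdom (encode c) = Wdom v := by
  ext x
  simp [Wdom, phi, hc, Part.eq_some_iff.2 hv]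

theorem ADN_uniform (δ : ℕ →. ℕ) (hδ : Partrec δ)
    (hfpf : ∀ n, ∀ a ∈ δ n, Wdom a ≠ Wdom n) :
    ∃ f : ℕ → ℕ, Computable f ∧
      (∀ e n, ∀ a ∈ phi e n, Wdom (f (Nat.pair e n)) = Wdom a) ∧
      (∀ e n, ¬(phi e n).Dom → ¬(δ (f (Nat.pair e n))).Dom) := by
  obtain ⟨race, hrace, hspec⟩ := Partrec.merge'
    (f := fun p : (ℕ × ℕ) × Code => phi p.1.1 p.1.2) (g := fun p => δ (encode p.2))
    (partrec₂_phi.comp (Computable.fst.comp Computable.fst) (Computable.snd.comp Computable.fst))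
    (hδ.comp (Computable.encode.comp Computable.snd))
  obtain ⟨g, hg, hfix⟩ := exists_computable_fixed_point_param
    (F := fun a c y => race (a, c) >>= fun v => phi v y)
    ((hrace.comp Computable.fst).bind
      (partrec₂_phi.comp Computable.snd (Computable.snd.comp Computable.fst)).to₂)
  have hwinner : ∀ a v, v ∈ race (a, g a) → Wdom (encode (g a)) = Wdom v ∧ v ∈ phi a.1 a.2 := by
    intro a v hv
    have hW := Wdom_encode_of_eval_eq_bind (hfix a) hv
    exact ⟨hW, ((hspec _).1 v hv).resolve_right fun hδv => hfpf _ v hδv hW.symm⟩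
  refine ⟨fun m => encode (g m.unpair), (Computable.encode.comp hg).comp Computable.unpair,
    fun e n a ha => ?_, fun e n hdiv hδdom => ?_⟩
  · obtain ⟨v, hv⟩ := Part.dom_iff_mem.1
      ((hspec ((e, n), g (e, n))).2.2 (Or.inl (Part.dom_iff_mem.2 ⟨a, ha⟩)))
    obtain ⟨hW, hve⟩ := hwinner (e, n) v hv
    simpa [Part.mem_unique hve ha] using hW
  · obtain ⟨v, hv⟩ := Part.dom_iff_mem.1
      ((hspec ((e, n), g (e, n))).2.2 (Or.inr (by simpa using hδdom)))
    exact hdiv (Part.dom_iff_mem.2 ⟨v, (hwinner (e, n) v hv).2⟩)
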